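/- arXiv:2307.13983 — 2 statements merged into one kernel-verified Lean document; each statement's English description precedes it below -/
import Mathlib

section
/- Fix s > 0. Let (X,d,m) be a metric measure space such that for every R₀ > 0 there exists c₀ > 0 with m(B_r(x))/m(B_R(x)) ≥ c₀ (r/R)^s for all x ∈ X and 0 < r < R ≤ R₀. Then for every bounded open Ω ⊆ X satisfying the corkscrew condition there exists C > 0 such that m(B_r(x) ∩ Ω)/m(B_R(x) ∩ Ω) ≥ C (r/R)^s for all x ∈ Ω̄ and all 0 < r < R. -/
open MeasureTheory

/-- The corkscrew condition for a bounded open set `Ω`. -/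
def CorkscrewCondition {X : Type*} [MetricSpace X] (Ω : Set X) : Prop :=
  ∃ ε : ℝ, 0 < ε ∧ ∀ x ∈ closure Ω, ∀ r : ℝ, 0 < r → r ≤ Metric.diam Ω →
    ∃ y : X, Metric.ball y (ε * r) ⊆ Ω ∩ Metric.ball x r

/-- If balls of the ambient space satisfy the volume lower bound
`m(B_r(x))/m(B_R(x)) ≥ c₀ (r/R)^s` for radii `r < R ≤ R₀`, then a bounded open
corkscrew domain `Ω` satisfies, for some `C > 0`,
`m(B_r(x) ∩ Ω)/m(B_R(x) ∩ Ω) ≥ C (r/R)^s` for all `x ∈ closure Ω` and all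
`0 < r < R`. -/
theorem stmt_9 {X : Type*} [MetricSpace X] [MeasurableSpace X] [BorelSpace X]
    (s : ℝ) (hs : 0 < s) (μ : Measure X)
    (hsupp : ∀ (y : X) (r : ℝ), 0 < r → 0 < μ (Metric.ball y r))
    (hfin : ∀ (y : X) (r : ℝ), μ (Metric.ball y r) < ⊤)
    (hvol : ∀ R₀ : ℝ, 0 < R₀ → ∃ c₀ : ℝ, 0 < c₀ ∧
      ∀ (x : X) (r R : ℝ), 0 < r → r < R → R ≤ R₀ →
        ENNReal.ofReal (c₀ * (r / R) ^ s) * μ (Metric.ball x R) ≤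
          μ (Metric.ball x r))
    (Ω : Set X) (hΩopen : IsOpen Ω) (hΩbdd : Bornology.IsBounded Ω)
    (hcork : CorkscrewCondition Ω) :
    ∃ C : ℝ, 0 < C ∧ ∀ x ∈ closure Ω, ∀ r R : ℝ, 0 < r → r < R →
      ENNReal.ofReal (C * (r / R) ^ s) * μ (Metric.ball x R ∩ Ω) ≤
        μ (Metric.ball x r ∩ Ω) := by
  obtain ⟨ε₀, hε₀, hcs₀⟩ := hcork
  set ε : ℝ := min ε₀ 1 with hεdef
  have hε : 0 < ε := lt_min hε₀ one_pos
  have hε1 : ε ≤ 1 := min_le_right _ _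
  have hcs : ∀ x ∈ closure Ω, ∀ r : ℝ, 0 < r → r ≤ Metric.diam Ω →
      ∃ y : X, Metric.ball y (ε * r) ⊆ Ω ∩ Metric.ball x r := by
    intro x hx r hr hrD
    obtain ⟨y, hy⟩ := hcs₀ x hx r hr hrD
    refine ⟨y, (Metric.ball_subset_ball ?_).trans hy⟩
    have := min_le_left ε₀ 1
    nlinarith
  by_cases hsub : Ω.Subsingleton
  · refine ⟨1, one_pos, ?_⟩
    intro x hx r R hr hrR
    have hR : 0 < R := hr.trans hrR
    have hmono : Metric.ball x R ∩ Ω ⊆ Metric.ball x r ∩ Ω := by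
      rintro z ⟨hzR, hzΩ⟩
      have h1 : Ω ⊆ {z} := fun w hw => hsub hw hzΩ
      have hxz : x = z := by
        have := closure_mono h1 hx
        simpa using this
      exact ⟨by rw [← hxz]; exact Metric.mem_ball_self hr, hzΩ⟩
    have h1 : ENNReal.ofReal (1 * (r / R) ^ s) ≤ 1 := by
      rw [one_mul]
      exact ENNReal.ofReal_le_one.mpr
        (Real.rpow_le_one (by positivity)
          ((div_le_one (hr.trans hrR)).mpr hrR.le) hs.le)
    calc ENNReal.ofReal (1 * (r / R) ^ s) * μ (Metric.ball x R ∩ Ω)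
        ≤ 1 * μ (Metric.ball x R ∩ Ω) := mul_le_mul' h1 le_rfl
      _ = μ (Metric.ball x R ∩ Ω) := one_mul _
      _ ≤ μ (Metric.ball x r ∩ Ω) := measure_mono hmono
  · have hΩnt : Ω.Nontrivial := Set.not_subsingleton_iff.mp hsub
    set D : ℝ := Metric.diam Ω with hDdef
    have hD : 0 < D := by
      obtain ⟨a, ha, b, hb, hab⟩ := hΩnt
      have h1 : dist a b ≤ D := Metric.dist_le_diam_of_mem hΩbdd ha hb
      have h2 : 0 < dist a b := dist_pos.mpr hab
      linarith
    obtain ⟨c₀, hc₀, hvol2⟩ := hvol (2 * D) (by positivity)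
    refine ⟨c₀ * (ε / 2) ^ s, by positivity, ?_⟩
    intro x hx r R hr hrR
    have hR : 0 < R := hr.trans hrR
    set ρ : ℝ := min r D with hρdef
    have hρ : 0 < ρ := lt_min hr hD
    have hρr : ρ ≤ r := min_le_left _ _
    obtain ⟨y, hy⟩ := hcs x hx ρ hρ (min_le_right _ _)
    have hyΩ : y ∈ Ω := (hy (Metric.mem_ball_self (by positivity))).1
    have hyx : dist y x < ρ := (hy (Metric.mem_ball_self (by positivity))).2
    have hyball : Metric.ball y (ε * ρ) ⊆ Metric.ball x r ∩ Ω := by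
      intro z hz
      obtain ⟨h1, h2⟩ := hy hz
      exact ⟨Metric.ball_subset_ball hρr h2, h1⟩
    set T : ℝ := 2 * min R D with hTdef
    have hminRD : 0 < min R D := lt_min hR hD
    have hT0 : 0 < T := by rw [hTdef]; linarith
    have hT2D : T ≤ 2 * D := by
      have := min_le_right R D
      nlinarith
    have hρminRD : ρ ≤ min R D := min_le_min hrR.le le_rfl
    have hρT : ε * ρ < T := by nlinarith
    have hsubT : Metric.ball x R ∩ Ω ⊆ Metric.ball y T := by
      rintro z ⟨hzR, hzΩ⟩
      have h1 : dist y z ≤ D := Metric.dist_le_diam_of_mem hΩbdd hyΩ hzΩ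
      have h2 : dist x z < R := Metric.mem_ball'.mp hzR
      have h3 : dist y z ≤ dist y x + dist x z := dist_triangle _ _ _
      have h4 : dist y z < 2 * min R D := by
        rcases min_cases R D with ⟨h, h'⟩ | ⟨h, h'⟩ <;> rw [h] <;> linarith
      exact Metric.mem_ball'.mpr h4
    have key := hvol2 y (ε * ρ) T (by positivity) hρT hT2D
    have hreal : c₀ * (ε / 2) ^ s * (r / R) ^ s ≤ c₀ * (ε * ρ / T) ^ s := by
      rw [mul_assoc, ← Real.mul_rpow (by positivity) (by positivity)]
      have hbase : ε / 2 * (r / R) ≤ ε * ρ / T := by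
        rw [div_mul_div_comm, div_le_div_iff₀ (by positivity) hT0]
        have hrm : r * min R D ≤ ρ * R := by
          rcases le_total r D with h | h
          · have : ρ = r := min_eq_left h
            rw [this]
            have := min_le_left R D
            nlinarith
          · have h1 : ρ = D := min_eq_right h
            have h2 : min R D = D := min_eq_right (by linarith)
            rw [h1, h2]
            nlinarith
        calc ε * r * T = ε * r * (2 * min R D) := by rw [hTdef]
          _ ≤ ε * ρ * (2 * R) := by nlinarith
      exact mul_le_mul_of_nonneg_left (Real.rpow_le_rpow (by positivity) hbase hs.le) hc₀.le
    calc ENNReal.ofReal (c₀ * (ε / 2) ^ s * (r / R) ^ s) * μ (Metric.ball x R ∩ Ω)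
        ≤ ENNReal.ofReal (c₀ * (ε * ρ / T) ^ s) * μ (Metric.ball y T) :=
          mul_le_mul' (ENNReal.ofReal_le_ofReal hreal) (measure_mono hsubT)
      _ ≤ μ (Metric.ball y (ε * ρ)) := key
      _ ≤ μ (Metric.ball x r ∩ Ω) := measure_mono hyball
end

section
/- Let X be a metric space, Ω ⊆ X a uniform domain, and f : Ω̄ → ℝ continuous. Denote by 𝒞 the set of connected components of Ω \ {f = 0} and by 𝒞̄ the set of connected components of Ω̄ \ {f = 0} (with the subspace topology of Ω̄). Then the map U ↦ U ∪ (∂U ∩ (∂Ω \ {f = 0})) is a bijection from 𝒞 onto 𝒞̄; in particular 𝒞 and 𝒞̄ have the same cardinality. -/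
open Set

def IsUniformDomain {X : Type*} [MetricSpace X] (Ω : Set X) (C : ℝ) : Prop :=
  IsOpen Ω ∧ Bornology.IsBounded Ω ∧ 1 < C ∧
  ∀ x ∈ Ω, ∀ y ∈ Ω, ∃ γ : ℝ → X,
    ContinuousOn γ (Set.Icc 0 1) ∧ γ 0 = x ∧ γ 1 = y ∧
    (∀ t ∈ Set.Icc (0 : ℝ) 1, γ t ∈ Ω) ∧
    eVariationOn γ (Set.Icc 0 1) ≤ ENNReal.ofReal (C * dist x y) ∧
    ∀ t ∈ Set.Icc (0 : ℝ) 1,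
      ENNReal.ofReal C⁻¹ *
          min (eVariationOn γ (Set.Icc 0 t)) (eVariationOn γ (Set.Icc t 1)) ≤
        ENNReal.ofReal (Metric.infDist (γ t) (frontier Ω))

/-- Key local lemma: near any point of the closure where `f ≠ 0`, all points of `Ω`
in a small ball lie in a single connected component of `Ω \ {f = 0}`. -/
lemma unifLocal {X : Type*} [MetricSpace X] {Ω : Set X} {C : ℝ}
    (hΩ : IsUniformDomain Ω C) {f : X → ℝ} (hf : ContinuousOn f (closure Ω))
    {x : X} (hx : x ∈ closure Ω) (hfx : ¬ f x = 0) :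
    ∃ δ > 0, ∀ y ∈ Ω ∩ Metric.ball x δ, Ω ∩ Metric.ball x δ ⊆
      connectedComponentIn (Ω \ {z | f z = 0}) y := by
  obtain ⟨hopen, -, hC, hcurve⟩ := hΩ
  have hC0 : (0:ℝ) < C := lt_trans one_pos hC
  -- ε with f ≠ 0 on closure Ω ∩ ball x ε
  have hmem : {z : X | f z ≠ 0} ∈ nhdsWithin x (closure Ω) := by
    have := hf x hx (isOpen_compl_singleton.mem_nhds (by simpa using hfx))
    simpa [Set.preimage, Set.compl_eq_univ_diff] using this
  obtain ⟨ε, hε, hball⟩ := Metric.mem_nhdsWithin_iff.mp hmem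
  refine ⟨ε / (2 * C + 2), by positivity, ?_⟩
  rintro y ⟨hyΩ, hyb⟩ z ⟨hzΩ, hzb⟩
  obtain ⟨γ, hγc, hγ0, hγ1, hγΩ, hγlen, -⟩ := hcurve y hyΩ z hzΩ
  have hKpre : IsPreconnected (γ '' Icc (0:ℝ) 1) :=
    (isPreconnected_Icc).image γ hγc
  have hKsub : γ '' Icc (0:ℝ) 1 ⊆ Ω \ {z | f z = 0} := by
    rintro w ⟨t, ht, rfl⟩
    refine ⟨hγΩ t ht, ?_⟩
    -- show γ t ∈ ball x ε so that f (γ t) ≠ 0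
    have h1 : edist (γ 0) (γ t) ≤ eVariationOn γ (Icc 0 1) :=
      eVariationOn.edist_le γ (by simp [Set.mem_Icc]) ht
    have h2 : edist (γ 0) (γ t) ≤ ENNReal.ofReal (C * dist y z) :=
      le_trans h1 hγlen
    have h3 : dist (γ 0) (γ t) ≤ C * dist y z :=
      (edist_le_ofReal (by positivity)).mp h2
    rw [Metric.mem_ball] at hyb hzb
    have hyz : dist y z < 2 * (ε / (2 * C + 2)) := by
      have htri := dist_triangle y x z
      rw [dist_comm x z] at htri
      have hyx : dist y x < ε / (2 * C + 2) := hyb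
      linarith
    have h6 : dist y (γ t) ≤ C * (2 * (ε / (2 * C + 2))) := by
      rw [← hγ0]
      nlinarith [h3, hyz, hC0, dist_nonneg (x := y) (y := z)]
    have h4 : dist x (γ t) < ε := by
      have htri : dist x (γ t) ≤ dist x y + dist y (γ t) := dist_triangle _ _ _
      rw [dist_comm x y] at htri
      have h2 : (0 : ℝ) < 2 * C + 2 := by positivity
      have key : ε / (2 * C + 2) * (2 * C + 2) = ε := div_mul_cancel₀ ε (ne_of_gt h2)
      have hdpos : (0 : ℝ) < ε / (2 * C + 2) := div_pos hε h2
      have hfin : ε / (2 * C + 2) + C * (2 * (ε / (2 * C + 2))) < ε := by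
        nlinarith [key, hdpos]
      linarith
    have : γ t ∈ Metric.ball x ε ∩ closure Ω :=
      ⟨by rwa [Metric.mem_ball, dist_comm], subset_closure (hγΩ t ht)⟩
    exact hball this
  have hyK : y ∈ γ '' Icc (0:ℝ) 1 := ⟨0, by simp, hγ0⟩
  have := hKpre.subset_connectedComponentIn hyK hKsub
  exact this ⟨1, by simp, hγ1⟩

section

variable {X : Type*} [MetricSpace X] {Ω : Set X} {C : ℝ} {f : X → ℝ}

/-- The candidate component of `closure Ω \ {f = 0}` associated to `W`. -/
def Qset (Ω : Set X) (f : X → ℝ) (W : Set X) : Set X :=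
  {x | x ∈ closure Ω \ {z | f z = 0} ∧ ∃ δ > 0, Ω ∩ Metric.ball x δ ⊆ W}

lemma Qset_subset_T {W : Set X} : Qset Ω f W ⊆ closure Ω \ {z | f z = 0} :=
  fun _ h => h.1

lemma Qset_subset_closure {W : Set X} : Qset Ω f W ⊆ closure W := by
  rintro x ⟨⟨hxc, -⟩, δ, hδ, hsub⟩
  rw [Metric.mem_closure_iff]
  intro ε hε
  obtain ⟨w, hwΩ, hwd⟩ := Metric.mem_closure_iff.mp hxc (min ε δ) (lt_min hε hδ)
  exact ⟨w, hsub ⟨hwΩ, by rw [Metric.mem_ball, dist_comm]; exact hwd.trans_le (min_le_right _ _)⟩,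
    hwd.trans_le (min_le_left _ _)⟩

lemma comp_subset_Qset (hΩ : IsUniformDomain Ω C) (hf : ContinuousOn f (closure Ω))
    {y : X} (hy : y ∈ Ω \ {z | f z = 0}) :
    connectedComponentIn (Ω \ {z | f z = 0}) y ⊆
      Qset Ω f (connectedComponentIn (Ω \ {z | f z = 0}) y) := by
  intro w hw
  have hwS : w ∈ Ω \ {z | f z = 0} := connectedComponentIn_subset _ _ hw
  obtain ⟨δ, hδ, h⟩ := unifLocal hΩ hf (subset_closure hwS.1) hwS.2
  refine ⟨⟨subset_closure hwS.1, hwS.2⟩, δ, hδ, ?_⟩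
  have hwmem : w ∈ Ω ∩ Metric.ball w δ := ⟨hwS.1, Metric.mem_ball_self hδ⟩
  have := h w hwmem
  rwa [← connectedComponentIn_eq hw] at this

lemma Qset_preconnected (hΩ : IsUniformDomain Ω C) (hf : ContinuousOn f (closure Ω))
    {y : X} (hy : y ∈ Ω \ {z | f z = 0}) :
    IsPreconnected (Qset Ω f (connectedComponentIn (Ω \ {z | f z = 0}) y)) :=
  isPreconnected_connectedComponentIn.subset_closure
    (comp_subset_Qset hΩ hf hy) Qset_subset_closure

/-- Hard direction: the connected component in `closure Ω \ {f = 0}` of a point of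
`Qset Ω f W` is contained in `Qset Ω f W`. -/
lemma compT_subset_Qset (hΩ : IsUniformDomain Ω C) (hf : ContinuousOn f (closure Ω))
    {y x : X} (hy : y ∈ Ω \ {z | f z = 0})
    (hx : x ∈ Qset Ω f (connectedComponentIn (Ω \ {z | f z = 0}) y)) :
    connectedComponentIn (closure Ω \ {z | f z = 0}) x ⊆
      Qset Ω f (connectedComponentIn (Ω \ {z | f z = 0}) y) := by
  classical
  set Z := {z : X | f z = 0} with hZ
  set S := Ω \ Z with hS
  set T := closure Ω \ Z with hT
  set W := connectedComponentIn S y with hWdef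
  have hchoice : ∀ a : X, ∃ δ : ℝ, ∃ p : X, a ∈ T →
      0 < δ ∧ p ∈ Ω ∩ Metric.ball a δ ∧
        Ω ∩ Metric.ball a δ ⊆ connectedComponentIn S p := by
    intro a
    by_cases ha : a ∈ T
    · obtain ⟨δ, hδ, hsub⟩ := unifLocal hΩ hf ha.1 ha.2
      obtain ⟨q, hq, hqd⟩ := Metric.mem_closure_iff.mp ha.1 δ hδ
      have hqm : q ∈ Ω ∩ Metric.ball a δ := ⟨hq, by rwa [Metric.mem_ball, dist_comm]⟩
      exact ⟨δ, q, fun _ => ⟨hδ, hqm, hsub q hqm⟩⟩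
    · exact ⟨1, a, fun h => absurd h ha⟩
  choose r p hrp using hchoice
  -- merging lemma
  have merge : ∀ a ∈ T, ∀ b ∈ T, ∀ z ∈ T, z ∈ Metric.ball a (r a / 2) →
      z ∈ Metric.ball b (r b / 2) →
      connectedComponentIn S (p a) = connectedComponentIn S (p b) := by
    intro a ha b hb z hz hza hzb
    obtain ⟨hra, -, hsa⟩ := hrp a ha
    obtain ⟨hrb, -, hsb⟩ := hrp b hb
    have hs : (0:ℝ) < min (r a / 2) (r b / 2) := lt_min (by linarith) (by linarith)
    obtain ⟨w, hwΩ, hwd⟩ := Metric.mem_closure_iff.mp hz.1 _ hs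
    rw [Metric.mem_ball] at hza hzb
    have hwa : w ∈ Ω ∩ Metric.ball a (r a) := by
      refine ⟨hwΩ, ?_⟩
      rw [Metric.mem_ball]
      calc dist w a ≤ dist w z + dist z a := dist_triangle _ _ _
        _ < min (r a / 2) (r b / 2) + r a / 2 := by
            rw [dist_comm]; exact add_lt_add_of_lt_of_le hwd (le_of_lt hza)
        _ ≤ r a / 2 + r a / 2 := by gcongr; exact min_le_left _ _
        _ = r a := by ring
    have hwb : w ∈ Ω ∩ Metric.ball b (r b) := by
      refine ⟨hwΩ, ?_⟩
      rw [Metric.mem_ball]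
      calc dist w b ≤ dist w z + dist z b := dist_triangle _ _ _
        _ < min (r a / 2) (r b / 2) + r b / 2 := by
            rw [dist_comm]; exact add_lt_add_of_lt_of_le hwd (le_of_lt hzb)
        _ ≤ r b / 2 + r b / 2 := by gcongr; exact min_le_right _ _
        _ = r b := by ring
    rw [connectedComponentIn_eq (hsa hwa), connectedComponentIn_eq (hsb hwb)]
  -- x determines W
  have hxT : x ∈ T := hx.1
  have hxW : connectedComponentIn S (p x) = W := by
    obtain ⟨-, δ, hδ, hsub⟩ := hx
    obtain ⟨hrx, -, hsx⟩ := hrp x hxT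
    have hs : (0:ℝ) < min δ (r x) := lt_min hδ hrx
    obtain ⟨w, hwΩ, hwd⟩ := Metric.mem_closure_iff.mp hxT.1 _ hs
    have hwball : ∀ ρ : ℝ, min δ (r x) ≤ ρ → w ∈ Ω ∩ Metric.ball x ρ := by
      intro ρ hρ
      exact ⟨hwΩ, by rw [Metric.mem_ball, dist_comm]; exact hwd.trans_le hρ⟩
    have hwW : w ∈ W := hsub (hwball δ (min_le_left _ _))
    have hwpx : w ∈ connectedComponentIn S (p x) := hsx (hwball (r x) (min_le_right _ _))
    rw [connectedComponentIn_eq hwpx, hWdef,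
      connectedComponentIn_eq (show w ∈ connectedComponentIn S y from hwW)]
  set A := {a : X | a ∈ T ∧ connectedComponentIn S (p a) = W} with hA
  set B := {a : X | a ∈ T ∧ connectedComponentIn S (p a) ≠ W} with hB
  set u := ⋃ a ∈ A, Metric.ball a (r a / 2) with hu
  set v := ⋃ a ∈ B, Metric.ball a (r a / 2) with hv
  have hu_open : IsOpen u := isOpen_biUnion fun _ _ => Metric.isOpen_ball
  have hv_open : IsOpen v := isOpen_biUnion fun _ _ => Metric.isOpen_ball
  set V := connectedComponentIn T x with hV
  have hVT : V ⊆ T := connectedComponentIn_subset _ _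
  have hVuv : V ⊆ u ∪ v := by
    intro z hz
    have hzT : z ∈ T := hVT hz
    have hzball : z ∈ Metric.ball z (r z / 2) :=
      Metric.mem_ball_self (by have := (hrp z hzT).1; linarith)
    by_cases hzw : connectedComponentIn S (p z) = W
    · exact Or.inl (mem_biUnion ⟨hzT, hzw⟩ hzball)
    · exact Or.inr (mem_biUnion ⟨hzT, hzw⟩ hzball)
  have hdisj : V ∩ (u ∩ v) = ∅ := by
    ext z
    simp only [mem_inter_iff, mem_empty_iff_false, iff_false]
    rintro ⟨hzV, hzu, hzv⟩
    obtain ⟨a, haA, hza⟩ := mem_iUnion₂.mp hzu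
    obtain ⟨b, hbB, hzb⟩ := mem_iUnion₂.mp hzv
    have := merge a haA.1 b hbB.1 z (hVT hzV) hza hzb
    exact hbB.2 (this ▸ haA.2)
  have hVu : (V ∩ u).Nonempty := by
    refine ⟨x, mem_connectedComponentIn hxT, ?_⟩
    have hrx := (hrp x hxT).1
    exact mem_biUnion ⟨hxT, hxW⟩ (Metric.mem_ball_self (by linarith))
  have hVv : V ∩ v = ∅ := by
    by_contra h
    have hne : (V ∩ v).Nonempty := nonempty_iff_ne_empty.mpr h
    have := isPreconnected_connectedComponentIn (F := T) (x := x)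
      u v hu_open hv_open hVuv hVu hne
    rw [hdisj] at this
    exact this.ne_empty rfl
  intro z hzV
  have hzT : z ∈ T := hVT hzV
  have hzu : z ∈ u := by
    rcases hVuv hzV with h | h
    · exact h
    · exfalso
      have hmem : z ∈ V ∩ v := ⟨hzV, h⟩
      rw [hVv] at hmem
      exact hmem
  obtain ⟨a, haA, hza⟩ := mem_iUnion₂.mp hzu
  refine ⟨hzT, r a / 2, by have := (hrp a haA.1).1; linarith, ?_⟩
  intro w ⟨hwΩ, hwb⟩
  have hwa : w ∈ Ω ∩ Metric.ball a (r a) := by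
    refine ⟨hwΩ, ?_⟩
    rw [Metric.mem_ball] at hza hwb ⊢
    calc dist w a ≤ dist w z + dist z a := dist_triangle _ _ _
      _ < r a / 2 + r a / 2 := add_lt_add hwb hza
      _ = r a := by ring
  have := (hrp a haA.1).2.2 hwa
  rwa [haA.2] at this

lemma Qset_eq_compT (hΩ : IsUniformDomain Ω C) (hf : ContinuousOn f (closure Ω))
    {y x : X} (hy : y ∈ Ω \ {z | f z = 0})
    (hx : x ∈ Qset Ω f (connectedComponentIn (Ω \ {z | f z = 0}) y)) :
    Qset Ω f (connectedComponentIn (Ω \ {z | f z = 0}) y) =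
      connectedComponentIn (closure Ω \ {z | f z = 0}) x :=
  subset_antisymm
    ((Qset_preconnected hΩ hf hy).subset_connectedComponentIn hx Qset_subset_T)
    (compT_subset_Qset hΩ hf hy hx)

lemma Qset_eq_union (hΩ : IsUniformDomain Ω C) (hf : ContinuousOn f (closure Ω))
    {y : X} (hy : y ∈ Ω \ {z | f z = 0}) :
    Qset Ω f (connectedComponentIn (Ω \ {z | f z = 0}) y) =
      connectedComponentIn (Ω \ {z | f z = 0}) y ∪
        (frontier (connectedComponentIn (Ω \ {z | f z = 0}) y) ∩
          (frontier Ω \ {z | f z = 0})) := by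
  set Z := {z : X | f z = 0} with hZ
  set S := Ω \ Z with hS
  set W := connectedComponentIn S y with hWdef
  have hWS : W ⊆ S := connectedComponentIn_subset _ _
  apply subset_antisymm
  · rintro x hx
    obtain ⟨⟨hxc, hxz⟩, δ, hδ, hsub⟩ := hx
    by_cases hxΩ : x ∈ Ω
    · exact Or.inl (hsub ⟨hxΩ, Metric.mem_ball_self hδ⟩)
    · refine Or.inr ⟨?_, ?_, hxz⟩
      · have hclW : x ∈ closure W := Qset_subset_closure ⟨⟨hxc, hxz⟩, δ, hδ, hsub⟩
        have hniW : x ∉ interior W := fun h => hxΩ (hWS (interior_subset h)).1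
        exact ⟨hclW, hniW⟩
      · rw [hΩ.1.frontier_eq]
        exact ⟨hxc, hxΩ⟩
  · rintro x (hx | ⟨hxfr, hxfrΩ, hxz⟩)
    · exact comp_subset_Qset hΩ hf hy hx
    · have hxc : x ∈ closure Ω := frontier_subset_closure hxfrΩ
      refine ⟨⟨hxc, hxz⟩, ?_⟩
      obtain ⟨δ, hδ, h⟩ := unifLocal hΩ hf hxc hxz
      have hclW : x ∈ closure W := frontier_subset_closure hxfr
      obtain ⟨w, hwW, hwd⟩ := Metric.mem_closure_iff.mp hclW δ hδ
      have hwm : w ∈ Ω ∩ Metric.ball x δ :=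
        ⟨(hWS hwW).1, by rwa [Metric.mem_ball, dist_comm]⟩
      refine ⟨δ, hδ, ?_⟩
      have := h w hwm
      rwa [← connectedComponentIn_eq (show w ∈ connectedComponentIn S y from hwW)] at this

end

/-- For a uniform domain `Ω` and a continuous `f : closure Ω → ℝ`, the map
`U ↦ U ∪ (∂U ∩ (∂Ω \ {f = 0}))` is a bijection from the set of connected
components of `Ω \ {f = 0}` onto the set of connected components of
`closure Ω \ {f = 0}`; in particular the two collections of nodal domains
have the same cardinality. -/
theorem stmt_16 {X : Type*} [MetricSpace X] (Ω : Set X)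
    (hΩ : ∃ C : ℝ, IsUniformDomain Ω C)
    (f : X → ℝ) (hf : ContinuousOn f (closure Ω)) :
    Set.BijOn (fun U : Set X => U ∪ (frontier U ∩ (frontier Ω \ {z | f z = 0})))
      {U : Set X | ∃ y ∈ Ω \ {z | f z = 0},
        U = connectedComponentIn (Ω \ {z | f z = 0}) y}
      {V : Set X | ∃ y ∈ closure Ω \ {z | f z = 0},
        V = connectedComponentIn (closure Ω \ {z | f z = 0}) y} := by
  obtain ⟨C, hU⟩ := hΩ
  set Z := {z : X | f z = 0} with hZ
  set S := Ω \ Z with hS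
  set T := closure Ω \ Z with hT
  have hmapval : ∀ y ∈ S,
      connectedComponentIn S y ∪
        (frontier (connectedComponentIn S y) ∩ (frontier Ω \ Z)) =
      connectedComponentIn T y := by
    intro y hy
    rw [← Qset_eq_union hU hf hy]
    exact Qset_eq_compT hU hf hy
      (comp_subset_Qset hU hf hy (mem_connectedComponentIn hy))
  refine ⟨?_, ?_, ?_⟩
  · rintro U ⟨y, hy, rfl⟩
    refine ⟨y, ⟨subset_closure hy.1, hy.2⟩, ?_⟩
    exact hmapval y hy
  · rintro U₁ ⟨y₁, hy₁, rfl⟩ U₂ ⟨y₂, hy₂, rfl⟩ h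
    have key : ∀ y ∈ S,
        (connectedComponentIn S y ∪
          (frontier (connectedComponentIn S y) ∩ (frontier Ω \ Z))) ∩ Ω =
        connectedComponentIn S y := by
      intro y hy
      apply subset_antisymm
      · rintro w ⟨hw | ⟨-, hwfr, -⟩, hwΩ⟩
        · exact hw
        · exact absurd hwΩ (by rw [hU.1.frontier_eq] at hwfr; exact hwfr.2)
      · intro w hw
        exact ⟨Or.inl hw, (connectedComponentIn_subset _ _ hw).1⟩
    have := congrArg (· ∩ Ω) h
    simp only at this
    rw [key y₁ hy₁, key y₂ hy₂] at this
    exact this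
  · rintro V ⟨x, hx, rfl⟩
    obtain ⟨δ, hδ, h⟩ := unifLocal hU hf hx.1 hx.2
    obtain ⟨y, hyΩ, hyd⟩ := Metric.mem_closure_iff.mp hx.1 δ hδ
    have hym : y ∈ Ω ∩ Metric.ball x δ := ⟨hyΩ, by rwa [Metric.mem_ball, dist_comm]⟩
    have hyS : y ∈ S := connectedComponentIn_subset _ _ (h y hym hym)
    have hxQ : x ∈ Qset Ω f (connectedComponentIn S y) :=
      ⟨hx, δ, hδ, fun w hw => h y hym hw⟩
    refine ⟨connectedComponentIn S y, ⟨y, hyS, rfl⟩, ?_⟩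
    simp only
    rw [hmapval y hyS]
    rw [← Qset_eq_compT hU hf hyS
      (comp_subset_Qset hU hf hyS (mem_connectedComponentIn hyS))]
    exact Qset_eq_compT hU hf hyS hxQ
end
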